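/- Suppose A ⊇ B ⊇ C is a tower of rings with B_C finitely generated projective as a right C-module. Then the left relative H-separable condition (B ⊗_C A ⊕ * ≅ A^n as B-A-bimodules) holds if and only if Hom(B_C, A_C) ⊕ * ≅ A^n as A-B-bimodules, where Hom(B_C, A_C) is the set of right C-module maps B → A with A-B-bimodule structure (a·f·b)(x) = a f(bx). -/

import Mathlib

/-!  A noncommutative relative tensor product `L ⊗_C R` for a ring `C` mapping
into rings `L` (acting on the right through `f`) and `R` (acting on the left
through `g`), together with the outer left `L`-action `lact`, the outer right
`R`-action `ract`, a lifting principle for balanced biadditive maps, and the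
multiplication map. -/

open scoped TensorProduct

noncomputable section
namespace NCT

variable {C L R : Type*} [Ring C] [Ring L] [Ring R]

/-- The submodule of relations `(l * f c) ⊗ r - l ⊗ (g c * r)`. -/
def rel (f : C →+* L) (g : C →+* R) : Submodule ℤ (L ⊗[ℤ] R) :=
  Submodule.span ℤ
    {x | ∃ (l : L) (c : C) (r : R), x = (l * f c) ⊗ₜ[ℤ] r - l ⊗ₜ[ℤ] (g c * r)}

/-- The relative tensor product `L ⊗_C R`. -/
def Tens (f : C →+* L) (g : C →+* R) : Type _ := (L ⊗[ℤ] R) ⧸ rel f g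

instance (f : C →+* L) (g : C →+* R) : AddCommGroup (Tens f g) :=
  inferInstanceAs (AddCommGroup ((L ⊗[ℤ] R) ⧸ rel f g))

variable (f : C →+* L) (g : C →+* R)

/-- The canonical image of `l ⊗ r` in `L ⊗_C R`. -/
def tmul (l : L) (r : R) : Tens f g := Submodule.Quotient.mk (l ⊗ₜ[ℤ] r)

lemma tmul_rel (l : L) (c : C) (r : R) :
    tmul f g (l * f c) r = tmul f g l (g c * r) := by
  refine (Submodule.Quotient.eq _).2 ?_
  exact Submodule.subset_span ⟨l, c, r, rfl⟩

lemma tmul_add_left (l l' : L) (r : R) :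
    tmul f g (l + l') r = tmul f g l r + tmul f g l' r := by
  show Submodule.Quotient.mk _ = _
  rw [TensorProduct.add_tmul, Submodule.Quotient.mk_add]; rfl

lemma tmul_add_right (l : L) (r r' : R) :
    tmul f g l (r + r') = tmul f g l r + tmul f g l r' := by
  show Submodule.Quotient.mk _ = _
  rw [TensorProduct.tmul_add, Submodule.Quotient.mk_add]; rfl

/-- Package a biadditive map as a bundled `AddMonoidHom`-valued hom. -/
def mkBilin {M N P : Type*} [AddCommGroup M] [AddCommGroup N] [AddCommGroup P]
    (φ : M → N → P)
    (h1 : ∀ m m' n, φ (m + m') n = φ m n + φ m' n)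
    (h2 : ∀ m n n', φ m (n + n') = φ m n + φ m n') : M →+ N →+ P :=
  AddMonoidHom.mk' (fun m => AddMonoidHom.mk' (φ m) (h2 m))
    (fun m m' => by ext n; exact h1 m m' n)

@[simp] lemma mkBilin_apply {M N P : Type*} [AddCommGroup M] [AddCommGroup N] [AddCommGroup P]
    (φ : M → N → P) (h1 h2) (m : M) (n : N) : mkBilin φ h1 h2 m n = φ m n := rfl

/-- Lift a balanced biadditive map to the relative tensor product. -/
def lift {P : Type*} [AddCommGroup P] (φ : L →+ R →+ P)
    (hbal : ∀ l c r, φ (l * f c) r = φ l (g c * r)) : Tens f g →+ P :=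
  (Submodule.liftQ (rel f g)
    (TensorProduct.liftAddHom φ (by
      intro n l r
      simp only [AddMonoidHom.map_zsmul, AddMonoidHom.smul_apply]) ).toIntLinearMap
    (by
      rw [rel, Submodule.span_le]
      rintro x ⟨l, c, r, rfl⟩
      simp only [SetLike.mem_coe, LinearMap.mem_ker, AddMonoidHom.coe_toIntLinearMap,
        map_sub, TensorProduct.liftAddHom_tmul]
      rw [hbal, sub_self])).toAddMonoidHom

@[simp] lemma lift_tmul {P : Type*} [AddCommGroup P] (φ : L →+ R →+ P)
    (hbal : ∀ l c r, φ (l * f c) r = φ l (g c * r)) (l : L) (r : R) :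
    lift f g φ hbal (tmul f g l r) = φ l r := rfl

/-- The outer left action of `L` on `L ⊗_C R`. -/
def lact (l : L) : Tens f g →+ Tens f g :=
  lift f g (mkBilin (fun l' r => tmul f g (l * l') r)
      (fun a b r => by rw [mul_add, tmul_add_left])
      (fun a r s => by rw [tmul_add_right]))
    (fun l' c r => by simp only [mkBilin_apply]; rw [← mul_assoc, tmul_rel])

@[simp] lemma lact_tmul (l l' : L) (r : R) :
    lact f g l (tmul f g l' r) = tmul f g (l * l') r := rfl

/-- The outer right action of `R` on `L ⊗_C R`. -/
def ract (r : R) : Tens f g →+ Tens f g :=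
  lift f g (mkBilin (fun l' r' => tmul f g l' (r' * r))
      (fun a b r' => by rw [tmul_add_left])
      (fun a r' s => by rw [add_mul, tmul_add_right]))
    (fun l' c r' => by simp only [mkBilin_apply]; rw [tmul_rel, mul_assoc])

@[simp] lemma ract_tmul (r r' : R) (l : L) :
    ract f g r (tmul f g l r') = tmul f g l (r' * r) := rfl

/-- The map induced on relative tensor products by a ring map on the left factor. -/
def mapLeft {L' : Type*} [Ring L'] (h : L →+* L') :
    Tens f g →+ Tens (h.comp f) g :=
  lift f g (mkBilin (fun l r => tmul (h.comp f) g (h l) r)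
      (fun a b r => by rw [map_add, tmul_add_left])
      (fun a r s => by rw [tmul_add_right]))
    (fun l c r => by
      simp only [mkBilin_apply, map_mul]
      exact tmul_rel (h.comp f) g (h l) c r)

@[simp] lemma mapLeft_tmul {L' : Type*} [Ring L'] (h : L →+* L') (l : L) (r : R) :
    mapLeft f g h (tmul f g l r) = tmul (h.comp f) g (h l) r := rfl

/-- The multiplication map `L ⊗_C R → R`, `l ⊗ r ↦ jl l * r`, for a ring map
`jl : L → R` compatible with the two maps from `C`. -/
def mulMap (jl : L →+* R) (hcomp : ∀ c, jl (f c) = g c) : Tens f g →+ R :=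
  lift f g (mkBilin (fun l r => jl l * r)
      (fun a b r => by rw [map_add, add_mul])
      (fun a r s => by rw [mul_add]))
    (fun l c r => by simp only [mkBilin_apply]; rw [map_mul, hcomp, mul_assoc])

@[simp] lemma mulMap_tmul (jl : L →+* R) (hcomp : ∀ c, jl (f c) = g c) (l : L) (r : R) :
    mulMap f g jl hcomp (tmul f g l r) = jl l * r := rfl

/-- Induction principle: every element of `L ⊗_C R` is built from `tmul`s. -/
lemma tens_induction {p : Tens f g → Prop} (zero : p 0)
    (tm : ∀ l r, p (tmul f g l r)) (add : ∀ x y, p x → p y → p (x + y)) :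
    ∀ x, p x := by
  intro x
  obtain ⟨y, rfl⟩ := Submodule.Quotient.mk_surjective _ x
  induction y using TensorProduct.induction_on with
  | zero => exact zero
  | tmul l r => exact tm l r
  | add a b ha hb =>
      rw [Submodule.Quotient.mk_add]
      exact add _ _ ha hb

end NCT
end

noncomputable section
open NCT

/-- The tower `A ⊇ B ⊇ C` (given by injective ring maps `ι : C → B`, `j : B → A`) is
*left relative H-separable*: `B ⊗_C A ⊕ * ≅ A^n` as `B`-`A`-bimodules. -/
def LeftRelHSep {C B A : Type*} [Ring C] [Ring B] [Ring A]
    (ι : C →+* B) (j : B →+* A) (n : ℕ) : Prop :=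
  ∃ (i : Tens ι (j.comp ι) →+ (Fin n → A)) (p : (Fin n → A) →+ Tens ι (j.comp ι)),
    (∀ (b : B) x, i (lact ι (j.comp ι) b x) = fun k => j b * i x k) ∧
    (∀ (a : A) x, i (ract ι (j.comp ι) a x) = fun k => i x k * a) ∧
    (∀ (b : B) v, p (fun k => j b * v k) = lact ι (j.comp ι) b (p v)) ∧
    (∀ (a : A) v, p (fun k => v k * a) = ract ι (j.comp ι) a (p v)) ∧
    ∀ x, p (i x) = x

/-- `B` is a *left relative separable extension of `C` in `A`*: the multiplication map
`μ : B ⊗_C A → A` splits as a `B`-`A`-bimodule epimorphism. -/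
def LeftRelSep {C B A : Type*} [Ring C] [Ring B] [Ring A]
    (ι : C →+* B) (j : B →+* A) : Prop :=
  ∃ σ : A →+ Tens ι (j.comp ι),
    (∀ (b : B) (a : A), σ (j b * a) = lact ι (j.comp ι) b (σ a)) ∧
    (∀ (a a' : A), σ (a * a') = ract ι (j.comp ι) a' (σ a)) ∧
    ∀ a, mulMap ι (j.comp ι) j (fun _ => rfl) (σ a) = a

/-- `B ⊇ C` is a separable extension: there is a `B`-central element
`e ∈ B ⊗_C B` with `μ(e) = 1`. -/
def IsSepExt {C B : Type*} [Ring C] [Ring B] (ι : C →+* B) : Prop :=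
  ∃ e : Tens ι ι, (∀ b : B, lact ι ι b e = ract ι ι b e) ∧
    mulMap ι ι (RingHom.id B) (fun _ => rfl) e = 1

/-- `Hom(B_C, A_C)`: the additive group of right `C`-module maps `B → A`. -/
def HomC {C B A : Type*} [Ring C] [Ring B] [Ring A] (ι : C →+* B) (κ : C →+* A) :
    AddSubgroup (B →+ A) where
  carrier := {f | ∀ (b : B) (c : C), f (b * ι c) = f b * κ c}
  add_mem' := by
    intro f g hf hg b c
    simp only [AddMonoidHom.add_apply, hf b c, hg b c, add_mul]
  zero_mem' := by intro b c; simp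
  neg_mem' := by
    intro f hf b c
    simp only [AddMonoidHom.neg_apply, hf b c, neg_mul]

/-- The left `A`-action on `Hom(B_C, A_C)`, `(a • f)(x) = a * f x`. -/
def asmul {C B A : Type*} [Ring C] [Ring B] [Ring A] (ι : C →+* B) (κ : C →+* A)
    (a : A) : ↥(HomC ι κ) →+ ↥(HomC ι κ) :=
  AddMonoidHom.mk' (fun f => ⟨(AddMonoidHom.mulLeft a).comp f.1, by
      intro b c
      simp only [AddMonoidHom.coe_comp, Function.comp_apply, AddMonoidHom.coe_mulLeft,
        f.2 b c, mul_assoc]⟩)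
    (fun f g => by
      apply Subtype.ext; ext x
      simp [mul_add])

/-- The right `B`-action on `Hom(B_C, A_C)`, `(f • b)(x) = f (b * x)`. -/
def bsmul {C B A : Type*} [Ring C] [Ring B] [Ring A] (ι : C →+* B) (κ : C →+* A)
    (b : B) : ↥(HomC ι κ) →+ ↥(HomC ι κ) :=
  AddMonoidHom.mk' (fun f => ⟨f.1.comp (AddMonoidHom.mulLeft b), by
      intro x c
      simp only [AddMonoidHom.coe_comp, Function.comp_apply, AddMonoidHom.coe_mulLeft,
        ← mul_assoc, f.2 (b * x) c]⟩)
    (fun f g => by apply Subtype.ext; ext x; simp)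


/-! Put `T = B ⊗_C A` and `H = Hom(B_C, A_C)` and pair them by `⟨f, b ⊗ a⟩ = f b * a`.
Every right `A`-linear `G : T → A` is `⟨f, -⟩` for `f = G (- ⊗ 1)`, so `Hom(T_A, A_A) ≅ H`, and
applying `Hom(-_A, A_A)` to a bimodule splitting `T ⇄ Aⁿ` gives a splitting `H ⇄ Aⁿ`.
Conversely, a dual basis `(xₘ, φₘ)` of `B_C` makes `T` reflexive: `y = ∑ₘ xₘ ⊗ ⟨φₘ, y⟩`, so the
pairing separates the points of `T`, and a splitting `H ⇄ Aⁿ` dualizes back to one of `T`. -/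

theorem NCT.hom_ext {C L R P : Type*} [Ring C] [Ring L] [Ring R] [AddCommGroup P]
    {f : C →+* L} {g : C →+* R} {F G : Tens f g →+ P}
    (h : ∀ l r, F (tmul f g l r) = G (tmul f g l r)) : F = G := by
  ext x
  induction x using tens_induction f g with
  | zero => simp only [map_zero]
  | tm l r => exact h l r
  | add x y hx hy => simp only [map_add, hx, hy]

theorem NCT.tmul_sum_left {C L R γ : Type*} [Ring C] [Ring L] [Ring R] (f : C →+* L)
    (g : C →+* R) (s : Finset γ) (l : γ → L) (r : R) :
    tmul f g (∑ m ∈ s, l m) r = ∑ m ∈ s, tmul f g (l m) r :=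
  map_sum (AddMonoidHom.mk' (tmul f g · r) (tmul_add_left f g · · r)) l s

section RowVectors

variable {I A : Type*} [DecidableEq I] [Semiring A]

theorem Pi.single_one_mul (k : I) (a : A) :
    (fun m => (Pi.single k 1 : I → A) m * a) = Pi.single k a := by
  funext m
  by_cases h : m = k <;> simp [h]

theorem Pi.mul_single_one (k : I) (a : A) :
    (fun m => a * (Pi.single k 1 : I → A) m) = Pi.single k a := by
  funext m
  by_cases h : m = k <;> simp [h]

variable [Fintype I]

theorem AddMonoidHom.eq_sum_apply_single_one_mul (G : (I → A) →+ A)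
    (hG : ∀ v a, G (fun k => v k * a) = G v * a) (w : I → A) :
    G w = ∑ k, G (Pi.single k 1) * w k := by
  conv_lhs => rw [← Finset.univ_sum_single w]
  rw [map_sum]
  exact Finset.sum_congr rfl fun k _ => by rw [← hG, Pi.single_one_mul]

theorem AddMonoidHom.eq_sum_mul_apply_single_one (F : (I → A) →+ A)
    (hF : ∀ a v, F (fun k => a * v k) = a * F v) (w : I → A) :
    F w = ∑ k, w k * F (Pi.single k 1) := by
  conv_lhs => rw [← Finset.univ_sum_single w]
  rw [map_sum]
  exact Finset.sum_congr rfl fun k _ => by rw [← hF, Pi.mul_single_one]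

end RowVectors

section Pairing

variable {C B A : Type*} [Ring C] [Ring B] [Ring A]

@[ext] theorem HomC.ext {ι : C →+* B} {κ : C →+* A} {f g : ↥(HomC ι κ)}
    (h : ∀ b, (f : B →+ A) b = (g : B →+ A) b) : f = g :=
  Subtype.ext (AddMonoidHom.ext h)

@[simp] theorem asmul_apply (ι : C →+* B) (κ : C →+* A) (a : A) (f : ↥(HomC ι κ)) (b : B) :
    (asmul ι κ a f : B →+ A) b = a * (f : B →+ A) b := rfl

@[simp] theorem bsmul_apply (ι : C →+* B) (κ : C →+* A) (b : B) (f : ↥(HomC ι κ)) (x : B) :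
    (bsmul ι κ b f : B →+ A) x = (f : B →+ A) (b * x) := rfl

variable (ι : C →+* B) (j : B →+* A)

def pairing : ↥(HomC ι (j.comp ι)) →+ Tens ι (j.comp ι) →+ A :=
  AddMonoidHom.mk'
    (fun f => lift ι (j.comp ι)
      (mkBilin (fun b a => (f : B →+ A) b * a)
        (fun b b' a => by rw [map_add, add_mul])
        (fun b a a' => by rw [mul_add]))
      (fun b c a => by simp only [mkBilin_apply]; rw [f.2 b c, mul_assoc]))
    (fun f g => hom_ext fun b a => add_mul _ _ _)

variable {ι j}

@[simp] theorem pairing_tmul (f : ↥(HomC ι (j.comp ι))) (b : B) (a : A) :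
    pairing ι j f (tmul ι (j.comp ι) b a) = (f : B →+ A) b * a := rfl

theorem pairing_asmul (a : A) (f : ↥(HomC ι (j.comp ι))) (x : Tens ι (j.comp ι)) :
    pairing ι j (asmul ι (j.comp ι) a f) x = a * pairing ι j f x :=
  DFunLike.congr_fun (f := pairing ι j (asmul ι (j.comp ι) a f))
    (g := (AddMonoidHom.mulLeft a).comp (pairing ι j f))
    (hom_ext fun _ _ => mul_assoc _ _ _) x

theorem pairing_bsmul (b : B) (f : ↥(HomC ι (j.comp ι))) (x : Tens ι (j.comp ι)) :
    pairing ι j (bsmul ι (j.comp ι) b f) x = pairing ι j f (lact ι (j.comp ι) b x) :=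
  DFunLike.congr_fun (f := pairing ι j (bsmul ι (j.comp ι) b f))
    (g := (pairing ι j f).comp (lact ι (j.comp ι) b))
    (hom_ext fun _ _ => rfl) x

theorem pairing_ract (f : ↥(HomC ι (j.comp ι))) (a : A) (x : Tens ι (j.comp ι)) :
    pairing ι j f (ract ι (j.comp ι) a x) = pairing ι j f x * a :=
  DFunLike.congr_fun (f := (pairing ι j f).comp (ract ι (j.comp ι) a))
    (g := (AddMonoidHom.mulRight a).comp (pairing ι j f))
    (hom_ext fun _ _ => (mul_assoc _ _ _).symm) x

end Pairing

def HomCIsSummand {C B A : Type*} [Ring C] [Ring B] [Ring A]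
    (ι : C →+* B) (j : B →+* A) (n : ℕ) : Prop :=
  ∃ (i : ↥(HomC ι (j.comp ι)) →+ (Fin n → A))
    (p : (Fin n → A) →+ ↥(HomC ι (j.comp ι))),
    (∀ (a : A) f, i (asmul ι (j.comp ι) a f) = fun k => a * i f k) ∧
    (∀ (b : B) f, i (bsmul ι (j.comp ι) b f) = fun k => i f k * j b) ∧
    (∀ (a : A) v, p (fun k => a * v k) = asmul ι (j.comp ι) a (p v)) ∧
    (∀ (b : B) v, p (fun k => v k * j b) = bsmul ι (j.comp ι) b (p v)) ∧
    ∀ f, p (i f) = f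

section ToHom

variable {C B A : Type*} [Ring C] [Ring B] [Ring A] {ι : C →+* B} {j : B →+* A} {n : ℕ}

/-- The inverse of `f ↦ ⟨f, -⟩`, realizing `Hom((B ⊗_C A)_A, A_A) ≅ Hom(B_C, A_C)`. -/
def homOfRightLinear (G : Tens ι (j.comp ι) →+ A)
    (hG : ∀ a x, G (ract ι (j.comp ι) a x) = G x * a) : ↥(HomC ι (j.comp ι)) :=
  ⟨AddMonoidHom.mk' (fun b => G (tmul ι (j.comp ι) b 1))
      (fun b b' => by rw [tmul_add_left, map_add]),
    fun b c => by
      show G _ = G _ * _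
      rw [← hG, ract_tmul, one_mul, tmul_rel, mul_one]⟩

def piToHomC (i : Tens ι (j.comp ι) →+ (Fin n → A))
    (hi : ∀ (a : A) x, i (ract ι (j.comp ι) a x) = fun k => i x k * a) :
    (Fin n → A) →+ ↥(HomC ι (j.comp ι)) :=
  AddMonoidHom.mk'
    (fun v => homOfRightLinear
      (AddMonoidHom.mk' (fun x => ∑ k, v k * i x k) fun x y => by
        simp only [map_add, Pi.add_apply, mul_add, Finset.sum_add_distrib])
      fun a x => by simp only [AddMonoidHom.mk'_apply, hi, Finset.sum_mul, mul_assoc])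
    fun v w => by ext b; simp [homOfRightLinear, add_mul, Finset.sum_add_distrib]

@[simp] theorem piToHomC_apply (i : Tens ι (j.comp ι) →+ (Fin n → A)) (hi) (v : Fin n → A)
    (b : B) : (piToHomC i hi v : B →+ A) b = ∑ k, v k * i (tmul ι (j.comp ι) b 1) k := rfl

theorem homCIsSummand_of_leftRelHSep (h : LeftRelHSep ι j n) : HomCIsSummand ι j n := by
  obtain ⟨i, p, hiB, hiA, hpB, hpA, hpi⟩ := h
  refine ⟨AddMonoidHom.pi fun k => (pairing ι j).flip (p (Pi.single k 1)), piToHomC i hiA,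
    fun a f => funext fun k => pairing_asmul a f _, fun b f => funext fun k => ?_,
    fun a v => ?_, fun b v => ?_, fun f => ?_⟩
  · show pairing ι j _ _ = pairing ι j f _ * j b
    rw [pairing_bsmul, ← hpB, Pi.mul_single_one, ← Pi.single_one_mul, hpA, pairing_ract]
  · ext b
    simp [Finset.mul_sum, mul_assoc]
  · ext b'
    rw [bsmul_apply, piToHomC_apply, piToHomC_apply, ← lact_tmul, hiB]
    simp only [mul_assoc]
  · ext b
    calc ∑ k, pairing ι j f (p (Pi.single k 1)) * i (tmul ι (j.comp ι) b 1) k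
        = pairing ι j f (p (i (tmul ι (j.comp ι) b 1))) :=
          (((pairing ι j f).comp p).eq_sum_apply_single_one_mul
            (fun v a => by simp only [AddMonoidHom.comp_apply, hpA, pairing_ract]) _).symm
      _ = (f : B →+ A) b := by rw [hpi, pairing_tmul, mul_one]

end ToHom

/-- A dual basis of `B` as a right `C`-module, i.e. a witness that `B_C` is finitely
generated projective. -/
structure DualBasis {C B : Type*} [Ring C] [Ring B] (ι : C →+* B) (N : ℕ) where
  elem : Fin N → B
  coord : Fin N → (B →+ C)
  coord_mul : ∀ k b c, coord k (b * ι c) = coord k b * c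
  eq_sum : ∀ b, b = ∑ k, elem k * ι (coord k b)

namespace DualBasis

variable {C B A : Type*} [Ring C] [Ring B] [Ring A] {ι : C →+* B} {N : ℕ}
  (d : DualBasis ι N) (j : B →+* A)

def homCoord (m : Fin N) : ↥(HomC ι (j.comp ι)) :=
  ⟨(j.comp ι).toAddMonoidHom.comp (d.coord m), fun b c => by
    show j (ι (d.coord m (b * ι c))) = j (ι (d.coord m b)) * j (ι c)
    rw [d.coord_mul, map_mul, map_mul]⟩

@[simp] theorem homCoord_apply (m : Fin N) (b : B) :
    (d.homCoord j m : B →+ A) b = j (ι (d.coord m b)) := rfl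

/-- The inverse of the evaluation map `B ⊗_C A → Hom(H_A, A_A)`, `y ↦ ⟨-, y⟩`. -/
def lift : (↥(HomC ι (j.comp ι)) →+ A) →+ Tens ι (j.comp ι) :=
  AddMonoidHom.mk' (fun F => ∑ m, tmul ι (j.comp ι) (d.elem m) (F (d.homCoord j m)))
    fun F G => by simp only [AddMonoidHom.add_apply, tmul_add_right, Finset.sum_add_distrib]

variable {j}

theorem hom_eq_sum_asmul (f : ↥(HomC ι (j.comp ι))) :
    f = ∑ m, asmul ι (j.comp ι) ((f : B →+ A) (d.elem m)) (d.homCoord j m) := by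
  ext b
  conv_lhs => rw [d.eq_sum b]
  simp only [map_sum, AddSubgroup.val_finsetSum, AddMonoidHom.finsetSum_apply, asmul_apply,
    homCoord_apply]
  exact Finset.sum_congr rfl fun m _ => f.2 _ _

theorem pairing_lift (F : ↥(HomC ι (j.comp ι)) →+ A)
    (hF : ∀ a f, F (asmul ι (j.comp ι) a f) = a * F f) (f : ↥(HomC ι (j.comp ι))) :
    pairing ι j f (d.lift j F) = F f := by
  conv_rhs => rw [d.hom_eq_sum_asmul f]
  simp [lift, hF]

theorem lift_flip_pairing (y : Tens ι (j.comp ι)) : d.lift j ((pairing ι j).flip y) = y := by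
  suffices (d.lift j).comp (pairing ι j).flip = AddMonoidHom.id _ from
    DFunLike.congr_fun this y
  refine hom_ext fun b a => ?_
  simp only [AddMonoidHom.comp_apply, lift, AddMonoidHom.mk'_apply,
    AddMonoidHom.flip_apply, pairing_tmul, homCoord_apply, AddMonoidHom.id_apply]
  conv_rhs => rw [d.eq_sum b, tmul_sum_left]
  exact Finset.sum_congr rfl fun m _ => (tmul_rel _ _ _ _ _).symm

theorem flip_pairing_injective (d : DualBasis ι N) : Function.Injective (pairing ι j).flip :=
  Function.LeftInverse.injective d.lift_flip_pairing

end DualBasis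

section FromHom

variable {C B A : Type*} [Ring C] [Ring B] [Ring A] {ι : C →+* B} {j : B →+* A} {n N : ℕ}

theorem leftRelHSep_of_homCIsSummand (d : DualBasis ι N) (h : HomCIsSummand ι j n) :
    LeftRelHSep ι j n := by
  obtain ⟨i, p, hiA, hiB, hpA, hpB, hpi⟩ := h
  let F : (Fin n → A) →+ ↥(HomC ι (j.comp ι)) →+ A :=
    (mkBilin (fun f v => ∑ k, i f k * v k)
      (fun f g v => by simp only [map_add, Pi.add_apply, add_mul, Finset.sum_add_distrib])
      (fun f v w => by simp only [Pi.add_apply, mul_add, Finset.sum_add_distrib])).flip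
  have pairing_lift_F (f v) : pairing ι j f (d.lift j (F v)) = ∑ k, i f k * v k :=
    d.pairing_lift (F v) (fun a f => by simp [F, hiA, Finset.mul_sum, mul_assoc]) f
  refine ⟨AddMonoidHom.pi fun k => pairing ι j (p (Pi.single k 1)), (d.lift j).comp F,
    fun b y => funext fun k => ?_, fun a y => funext fun k => pairing_ract _ a y,
    fun b v => d.flip_pairing_injective (AddMonoidHom.ext fun f => ?_),
    fun a v => d.flip_pairing_injective (AddMonoidHom.ext fun f => ?_),
    fun y => d.flip_pairing_injective (AddMonoidHom.ext fun f => ?_)⟩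
  · show pairing ι j (p (Pi.single k 1)) _ = j b * pairing ι j (p (Pi.single k 1)) y
    rw [← pairing_bsmul, ← hpB, Pi.single_one_mul, ← Pi.mul_single_one, hpA, pairing_asmul]
  · show pairing ι j f (d.lift j (F _)) = pairing ι j f (lact ι (j.comp ι) b (d.lift j (F v)))
    rw [← pairing_bsmul, pairing_lift_F, pairing_lift_F, hiB]
    simp only [mul_assoc]
  · show pairing ι j f (d.lift j (F _)) = pairing ι j f (ract ι (j.comp ι) a (d.lift j (F v)))
    rw [pairing_ract, pairing_lift_F, pairing_lift_F, Finset.sum_mul]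
    simp only [mul_assoc]
  · show pairing ι j f (d.lift j (F _)) = pairing ι j f y
    rw [pairing_lift_F]
    calc ∑ k, i f k * pairing ι j (p (Pi.single k 1)) y
        = pairing ι j (p (i f)) y :=
          ((((pairing ι j).flip y).comp p).eq_sum_mul_apply_single_one
            (fun a v => by simp only [AddMonoidHom.comp_apply, AddMonoidHom.flip_apply, hpA,
              pairing_asmul]) _).symm
      _ = pairing ι j f y := by rw [hpi]

end FromHom

theorem leftRelHSep_iff_hom_summand_general
    {C B A : Type*} [Ring C] [Ring B] [Ring A]
    (ι : C →+* B) (j : B →+* A)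
    (hfgp : ∃ (N : ℕ) (x : Fin N → B) (φ : Fin N → (B →+ C)),
      (∀ (k : Fin N) (b : B) (c : C), φ k (b * ι c) = φ k b * c) ∧
      ∀ b : B, b = ∑ k, x k * ι (φ k b))
    (n : ℕ) :
    LeftRelHSep ι j n ↔
    ∃ (i : ↥(HomC ι (j.comp ι)) →+ (Fin n → A))
      (p : (Fin n → A) →+ ↥(HomC ι (j.comp ι))),
      (∀ (a : A) f, i (asmul ι (j.comp ι) a f) = fun k => a * i f k) ∧
      (∀ (b : B) f, i (bsmul ι (j.comp ι) b f) = fun k => i f k * j b) ∧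
      (∀ (a : A) v, p (fun k => a * v k) = asmul ι (j.comp ι) a (p v)) ∧
      (∀ (b : B) v, p (fun k => v k * j b) = bsmul ι (j.comp ι) b (p v)) ∧
      ∀ f, p (i f) = f := by
  obtain ⟨N, x, φ, hφ, hdb⟩ := hfgp
  exact ⟨homCIsSummand_of_leftRelHSep, leftRelHSep_of_homCIsSummand ⟨x, φ, hφ, hdb⟩⟩

/-- for a tower `A ⊇ B ⊇ C` with `B_C` finitely generated projective,
the left relative H-separable condition `B ⊗_C A ⊕ * ≅ A^n` (as `B`-`A`-bimodules)
holds iff `Hom(B_C, A_C) ⊕ * ≅ A^n` as `A`-`B`-bimodules. -/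
theorem leftRelHSep_iff_hom_summand
    {C B A : Type*} [Ring C] [Ring B] [Ring A]
    (ι : C →+* B) (j : B →+* A)
    (hι : Function.Injective ι) (hj : Function.Injective j)
    (hfgp : ∃ (N : ℕ) (x : Fin N → B) (φ : Fin N → (B →+ C)),
      (∀ (k : Fin N) (b : B) (c : C), φ k (b * ι c) = φ k b * c) ∧
      ∀ b : B, b = ∑ k, x k * ι (φ k b))
    (n : ℕ) :
    LeftRelHSep ι j n ↔
    ∃ (i : ↥(HomC ι (j.comp ι)) →+ (Fin n → A))
      (p : (Fin n → A) →+ ↥(HomC ι (j.comp ι))),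
      (∀ (a : A) f, i (asmul ι (j.comp ι) a f) = fun k => a * i f k) ∧
      (∀ (b : B) f, i (bsmul ι (j.comp ι) b f) = fun k => i f k * j b) ∧
      (∀ (a : A) v, p (fun k => a * v k) = asmul ι (j.comp ι) a (p v)) ∧
      (∀ (b : B) v, p (fun k => v k * j b) = bsmul ι (j.comp ι) b (p v)) ∧
      ∀ f, p (i f) = f :=
  leftRelHSep_iff_hom_summand_general ι j hfgp n
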